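/- Let U be a unitary on H satisfying the SSQW conditions, and let {η₁ˣ, η₂ˣ}_{x∈ℤ} be orthonormal bases of the H_x with U H_x ⊆ ℂη₁^{x−1} ⊕ H_x ⊕ ℂη₂^{x+1} for all x ∈ ℤ. If for some y ∈ ℤ there is an orthonormal basis {ζ₁ʸ, ζ₂ʸ} of H_y with U P_y = |η₁ʸ⟩⟨ζ₁ʸ| + |η₂^{y+1}⟩⟨ζ₂ʸ|, then there exist orthonormal bases {ζ₁ˣ, ζ₂ˣ} of H_x for every x ∈ ℤ such that U = Σ_{x∈ℤ} |η₁ˣ⟩⟨ζ₁ˣ| + |η₂^{x+1}⟩⟨ζ₂ˣ| (equivalently, U ζ₁ˣ = η₁ˣ and U ζ₂ˣ = η₂^{x+1} for all x ∈ ℤ). -/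

import Mathlib

noncomputable section

/-- `H = ⊕_{x∈ℤ} H_x`, the ℓ² direct sum with each `H_x` a copy of `ℂ²`. -/
abbrev H : Type := lp (fun _ : ℤ × Fin 2 => ℂ) 2

/-- The canonical orthonormal basis vector `eᵢˣ` of `H_x` viewed in `H`. -/
def e (x : ℤ) (i : Fin 2) : H := lp.single 2 (x, i) 1

/-- The subspace `H_x` of `H`. -/
def Hx (x : ℤ) : Submodule ℂ H := Submodule.span ℂ {e x 0, e x 1}

/-- The rank-one operator `|u⟩⟨v| : w ↦ ⟨v, w⟩ u`. -/
def ketbra (u v : H) : H →L[ℂ] H := ((innerSL ℂ) v).smulRight u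

/-- The orthogonal projection of `H` onto `H_x`. -/
def P (x : ℤ) : H →L[ℂ] H := ketbra (e x 0) (e x 0) + ketbra (e x 1) (e x 1)

/-- A unitary (linear isometric equivalence) viewed as a continuous linear map. -/
def clm (U : H ≃ₗᵢ[ℂ] H) : H →L[ℂ] H := U.toLinearIsometry.toContinuousLinearMap

/-- `{u, v}` is an orthonormal basis of the two dimensional space `H_x`. -/
def ONBx (x : ℤ) (u v : H) : Prop :=
  u ∈ Hx x ∧ v ∈ Hx x ∧ ‖u‖ = 1 ∧ ‖v‖ = 1 ∧ (inner ℂ u v : ℂ) = 0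

/-- The SSQW conditions: `U H_x ⊆ H_{x-1} ⊕ H_x ⊕ H_{x+1}` and
`rank(P_{x±1} U P_x) ≤ 1` for all `x`. -/
def SSQW (U : H ≃ₗᵢ[ℂ] H) : Prop :=
  (∀ x : ℤ, ∀ ψ ∈ Hx x, U ψ ∈ Hx (x - 1) ⊔ Hx x ⊔ Hx (x + 1)) ∧
  (∀ x : ℤ, LinearMap.rank (((P (x + 1)).comp ((clm U).comp (P x))).toLinearMap) ≤ 1) ∧
  (∀ x : ℤ, LinearMap.rank (((P (x - 1)).comp ((clm U).comp (P x))).toLinearMap) ≤ 1)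

/-!
Put `K_x = ℂη₁ˣ ⊕ ℂη₂^{x+1}`. These planes are pairwise orthogonal, and the hypothesis on the
range of `U` says `U H_x ⊆ K_{x-1} ⊕ K_x`. The hypothesis at `y` says `U H_y = K_y`, and this
propagates in both directions. If `U H_k = K_k`, then `U H_{k+1}` is orthogonal to `K_k`, hence
lies in `K_{k+1}`. Conversely `K_{k-1}` is orthogonal to `U H_z` for every `z ≠ k - 1`, so
`U⁻¹ K_{k-1} ⊆ H_{k-1}`. All these spaces are planes, so both inclusions are equalities, and
`ζ₁ˣ = U⁻¹η₁ˣ`, `ζ₂ˣ = U⁻¹η₂^{x+1}` do the job.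
-/

open Module Submodule

section InnerProductSpace

variable {𝕜 E : Type*} [RCLike 𝕜] [NormedAddCommGroup E] [InnerProductSpace 𝕜 E]

theorem finrank_span_pair_of_inner_eq_zero {u v : E} (hu : u ≠ 0) (hv : v ≠ 0)
    (huv : inner 𝕜 u v = 0) : finrank 𝕜 (span 𝕜 {u, v}) = 2 := by
  have hli : LinearIndependent 𝕜 ![u, v] := by
    refine linearIndependent_of_ne_zero_of_inner_eq_zero (fun i => ?_) fun i j hij => ?_
    · fin_cases i <;> simpa
    · fin_cases i <;> fin_cases j <;> simp_all [inner_eq_zero_symm]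
  rw [← Matrix.range_cons_cons_empty u v ![], finrank_span_eq_card hli, Fintype.card_fin]

theorem Submodule.le_of_le_sup_of_isOrtho {A B C : Submodule 𝕜 E} (hBC : B ⟂ C)
    (hA : A ≤ B ⊔ C) (hAB : A ⟂ B) : A ≤ C := by
  have h := le_inf hA hAB.le
  rwa [sup_comm, sup_inf_assoc_of_le B hBC.symm.le, inf_orthogonal_eq_bot, sup_bot_eq] at h

end InnerProductSpace

theorem Submodule.eq_of_le_of_finrank_eq_two {K V : Type*} [DivisionRing K] [AddCommGroup V]
    [Module K V] {S T : Submodule K V} (hle : S ≤ T) (hS : finrank K S = 2)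
    (hT : finrank K T = 2) : S = T :=
  have : FiniteDimensional K T := Module.finite_of_finrank_pos (by omega)
  eq_of_le_of_finrank_eq hle (hS.trans hT.symm)

local notation "⟪" x ", " y "⟫" => @inner ℂ H _ x y

theorem inner_e_left (x : ℤ) (i : Fin 2) (f : H) : ⟪e x i, f⟫ = f (x, i) := by
  simp [e, lp.inner_single_left]

theorem e_apply (x : ℤ) (i : Fin 2) (q : ℤ × Fin 2) : e x i q = if q = (x, i) then 1 else 0 := by
  simp [e, Pi.single_apply]

theorem e_mem_Hx (x : ℤ) (i : Fin 2) : e x i ∈ Hx x := by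
  fin_cases i <;> exact subset_span (by simp)

theorem apply_eq_zero_of_mem_Hx {f : H} {x z : ℤ} (hf : f ∈ Hx x) (hz : z ≠ x) (i : Fin 2) :
    f (z, i) = 0 := by
  obtain ⟨a, b, rfl⟩ := mem_span_pair.1 hf
  simp only [lp.coeFn_add, lp.coeFn_smul, Pi.add_apply, Pi.smul_apply, e_apply]
  simp [hz]

theorem eq_of_apply_eq_zero {f : H} {x : ℤ} (hf : ∀ z ≠ x, ∀ i, f (z, i) = 0) :
    f = f (x, 0) • e x 0 + f (x, 1) • e x 1 := by
  ext ⟨z, i⟩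
  simp only [lp.coeFn_add, lp.coeFn_smul, Pi.add_apply, Pi.smul_apply, e_apply]
  by_cases hz : z = x
  · subst hz
    fin_cases i <;> simp
  · simp [hz, hf z hz i]

theorem Hx_isOrtho {x z : ℤ} (h : x ≠ z) : Hx x ⟂ Hx z := by
  refine isOrtho_span.2 fun u hu v hv => ?_
  obtain ⟨i, rfl⟩ : ∃ i, u = e x i := by aesop
  rw [inner_e_left]
  obtain ⟨j, rfl⟩ : ∃ j, v = e z j := by aesop
  exact apply_eq_zero_of_mem_Hx (e_mem_Hx z j) h i

theorem mem_Hx_of_inner_eq_zero {f : H} {x : ℤ} (h : ∀ z ≠ x, ∀ ψ ∈ Hx z, ⟪ψ, f⟫ = 0) :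
    f ∈ Hx x := by
  have hf : ∀ z ≠ x, ∀ i, f (z, i) = 0 := fun z hz i => by
    rw [← inner_e_left]
    exact h z hz _ (e_mem_Hx z i)
  rw [eq_of_apply_eq_zero hf]
  exact add_mem (smul_mem _ _ (e_mem_Hx x 0)) (smul_mem _ _ (e_mem_Hx x 1))

theorem e_ne_zero (x : ℤ) (i : Fin 2) : e x i ≠ 0 := fun h => by
  simpa [h] using e_apply x i (x, i)

theorem finrank_Hx (x : ℤ) : finrank ℂ (Hx x) = 2 :=
  finrank_span_pair_of_inner_eq_zero (e_ne_zero x 0) (e_ne_zero x 1)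
    (by simp [inner_e_left, e_apply])

theorem P_apply_of_mem {f : H} {x : ℤ} (hf : f ∈ Hx x) : P x f = f := by
  conv_rhs => rw [eq_of_apply_eq_zero fun z hz => apply_eq_zero_of_mem_Hx hf hz]
  simp [P, ketbra, inner_e_left]

theorem ONBx.ne_zero_left {x : ℤ} {u v : H} (h : ONBx x u v) : u ≠ 0 :=
  ne_zero_of_norm_ne_zero (by simp [h.2.2.1])

theorem ONBx.ne_zero_right {x : ℤ} {u v : H} (h : ONBx x u v) : v ≠ 0 :=
  ne_zero_of_norm_ne_zero (by simp [h.2.2.2.1])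

theorem ONBx.span_eq {x : ℤ} {u v : H} (h : ONBx x u v) : span ℂ {u, v} = Hx x :=
  eq_of_le_of_finrank_eq_two (span_le.2 (Set.insert_subset h.1 (by simpa using h.2.1)))
    (finrank_span_pair_of_inner_eq_zero h.ne_zero_left h.ne_zero_right h.2.2.2.2) (finrank_Hx x)

theorem finrank_map_Hx (U : H ≃ₗᵢ[ℂ] H) (x : ℤ) :
    finrank ℂ ((Hx x).map (U : H →ₗ[ℂ] H)) = 2 :=
  (LinearEquiv.finrank_map_eq U.toLinearEquiv _).trans (finrank_Hx x)

section Propagation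

variable {U : H ≃ₗᵢ[ℂ] H} {K : ℤ → Submodule ℂ H}

theorem map_Hx_succ_eq (hK : Pairwise fun x z => K x ⟂ K z) (hK2 : ∀ x, finrank ℂ (K x) = 2)
    (hUK : ∀ x, (Hx x).map (U : H →ₗ[ℂ] H) ≤ K (x - 1) ⊔ K x) {k : ℤ}
    (hk : (Hx k).map (U : H →ₗ[ℂ] H) = K k) :
    (Hx (k + 1)).map (U : H →ₗ[ℂ] H) = K (k + 1) := by
  have hle : (Hx (k + 1)).map (U : H →ₗ[ℂ] H) ≤ K k ⊔ K (k + 1) := by simpa using hUK (k + 1)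
  have hortho : (Hx (k + 1)).map (U : H →ₗ[ℂ] H) ⟂ K k :=
    hk ▸ (Hx_isOrtho (by omega)).map U.toLinearIsometry
  exact eq_of_le_of_finrank_eq_two (le_of_le_sup_of_isOrtho (hK (by omega)) hle hortho)
    (finrank_map_Hx U _) (hK2 _)

theorem map_Hx_pred_eq (hK : Pairwise fun x z => K x ⟂ K z) (hK2 : ∀ x, finrank ℂ (K x) = 2)
    (hUK : ∀ x, (Hx x).map (U : H →ₗ[ℂ] H) ≤ K (x - 1) ⊔ K x) {k : ℤ}
    (hk : (Hx k).map (U : H →ₗ[ℂ] H) = K k) :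
    (Hx (k - 1)).map (U : H →ₗ[ℂ] H) = K (k - 1) := by
  have hortho : ∀ z ≠ k - 1, (Hx z).map (U : H →ₗ[ℂ] H) ⟂ K (k - 1) := by
    intro z hz
    by_cases hzk : z = k
    · subst hzk
      exact hk ▸ hK (by omega)
    · exact (isOrtho_sup_left.2 ⟨hK (by omega), hK hz⟩).mono_left (hUK z)
  have hle : K (k - 1) ≤ (Hx (k - 1)).map (U : H →ₗ[ℂ] H) := by
    intro v hv
    rw [← U.apply_symm_apply v]
    refine mem_map_of_mem (mem_Hx_of_inner_eq_zero fun z hz ψ hψ => ?_)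
    rw [← U.inner_map_eq_flip]
    exact (hortho z hz).inner_eq (mem_map_of_mem hψ) hv
  exact (eq_of_le_of_finrank_eq_two hle (hK2 _) (finrank_map_Hx U _)).symm

theorem map_Hx_eq (hK : Pairwise fun x z => K x ⟂ K z) (hK2 : ∀ x, finrank ℂ (K x) = 2)
    (hUK : ∀ x, (Hx x).map (U : H →ₗ[ℂ] H) ≤ K (x - 1) ⊔ K x) {y : ℤ}
    (hy : (Hx y).map (U : H →ₗ[ℂ] H) = K y) (x : ℤ) :
    (Hx x).map (U : H →ₗ[ℂ] H) = K x := by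
  induction x using Int.inductionOn' (b := y) with
  | zero => exact hy
  | succ k _ hk => exact map_Hx_succ_eq hK hK2 hUK hk
  | pred k _ hk => exact map_Hx_pred_eq hK hK2 hUK hk

end Propagation

def Kx (η₁ η₂ : ℤ → H) (x : ℤ) : Submodule ℂ H := span ℂ {η₁ x, η₂ (x + 1)}

section Frame

variable {η₁ η₂ : ℤ → H}

theorem inner_η₁_η₂_succ_eq_zero (hη : ∀ x, ONBx x (η₁ x) (η₂ x)) (x : ℤ) :
    ⟪η₁ x, η₂ (x + 1)⟫ = 0 :=
  (Hx_isOrtho (by omega)).inner_eq (hη x).1 (hη _).2.1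

theorem Kx_isOrtho (hη : ∀ x, ONBx x (η₁ x) (η₂ x)) :
    Pairwise fun x z => Kx η₁ η₂ x ⟂ Kx η₁ η₂ z := by
  intro x z hxz
  refine isOrtho_span.2 ?_
  simp only [Set.mem_insert_iff, Set.mem_singleton_iff, forall_eq_or_imp, forall_eq]
  refine ⟨⟨(Hx_isOrtho hxz).inner_eq (hη x).1 (hη z).1, ?_⟩, ?_,
    (Hx_isOrtho (by omega)).inner_eq (hη _).2.1 (hη _).2.1⟩
  · by_cases h : x = z + 1
    · subst h
      exact (hη _).2.2.2.2
    · exact (Hx_isOrtho h).inner_eq (hη x).1 (hη _).2.1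
  · by_cases h : x + 1 = z
    · subst h
      exact inner_eq_zero_symm.1 (hη _).2.2.2.2
    · exact (Hx_isOrtho h).inner_eq (hη _).2.1 (hη z).1

theorem finrank_Kx (hη : ∀ x, ONBx x (η₁ x) (η₂ x)) (x : ℤ) : finrank ℂ (Kx η₁ η₂ x) = 2 :=
  finrank_span_pair_of_inner_eq_zero (hη x).ne_zero_left (hη _).ne_zero_right
    (inner_η₁_η₂_succ_eq_zero hη x)

theorem map_Hx_le_Kx_sup (U : H ≃ₗᵢ[ℂ] H) (hη : ∀ x, ONBx x (η₁ x) (η₂ x))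
    (hrange : ∀ x : ℤ, ∀ ψ ∈ Hx x,
      U ψ ∈ span ℂ {η₁ (x - 1)} ⊔ Hx x ⊔ span ℂ {η₂ (x + 1)}) (x : ℤ) :
    (Hx x).map (U : H →ₗ[ℂ] H) ≤ Kx η₁ η₂ (x - 1) ⊔ Kx η₁ η₂ x := by
  have hle : span ℂ {η₁ (x - 1)} ⊔ Hx x ⊔ span ℂ {η₂ (x + 1)} ≤
      Kx η₁ η₂ (x - 1) ⊔ Kx η₁ η₂ x := by
    rw [← (hη x).span_eq, Kx, Kx, sub_add_cancel, ← span_union, ← span_union, ← span_union]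
    exact span_mono (by intro v; simp; tauto)
  rintro _ ⟨ψ, hψ, rfl⟩
  exact hle (hrange x ψ hψ)

end Frame

theorem ONBx.of_mem_map {U : H ≃ₗᵢ[ℂ] H} {x : ℤ} {u v : H}
    (hu : u ∈ (Hx x).map (U : H →ₗ[ℂ] H)) (hv : v ∈ (Hx x).map (U : H →ₗ[ℂ] H))
    (hu1 : ‖u‖ = 1) (hv1 : ‖v‖ = 1) (huv : ⟪u, v⟫ = 0) : ONBx x (U.symm u) (U.symm v) :=
  ⟨(mem_map_equiv _ (e := U.toLinearEquiv)).1 hu, (mem_map_equiv _ (e := U.toLinearEquiv)).1 hv,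
    by simpa using hu1, by simpa using hv1, by simpa using huv⟩

theorem map_Hx_eq_Kx_of_comp_P_eq {U : H ≃ₗᵢ[ℂ] H} {η₁ η₂ : ℤ → H} {y : ℤ} {ζ₁ ζ₂ : H}
    (hζ : ONBx y ζ₁ ζ₂) (hUPy : (clm U).comp (P y) = ketbra (η₁ y) ζ₁ + ketbra (η₂ (y + 1)) ζ₂) :
    (Hx y).map (U : H →ₗ[ℂ] H) = Kx η₁ η₂ y := by
  have hU : ∀ ζ ∈ Hx y, U ζ = ⟪ζ₁, ζ⟫ • η₁ y + ⟪ζ₂, ζ⟫ • η₂ (y + 1) := fun ζ hζ => by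
    simpa [clm, ketbra, P_apply_of_mem hζ] using DFunLike.congr_fun hUPy ζ
  rw [← hζ.span_eq, map_span, Set.image_pair]
  obtain ⟨hζ₁, hζ₂, hζ₁1, hζ₂1, hζ₁₂⟩ := hζ
  simp [hU _ hζ₁, hU _ hζ₂, hζ₁1, hζ₂1, hζ₁₂, inner_eq_zero_symm.1 hζ₁₂, Kx]

theorem exclude_case_two_general (U : H ≃ₗᵢ[ℂ] H) (η₁ η₂ : ℤ → H)
    (hη : ∀ x : ℤ, ONBx x (η₁ x) (η₂ x))
    (hrange : ∀ x : ℤ, ∀ ψ ∈ Hx x,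
      U ψ ∈ Submodule.span ℂ {η₁ (x - 1)} ⊔ Hx x ⊔ Submodule.span ℂ {η₂ (x + 1)})
    (y : ℤ) (ζ₁ ζ₂ : H) (hζ : ONBx y ζ₁ ζ₂)
    (hUPy : (clm U).comp (P y) = ketbra (η₁ y) ζ₁ + ketbra (η₂ (y + 1)) ζ₂) :
    ∃ ζ₁' ζ₂' : ℤ → H, (∀ x : ℤ, ONBx x (ζ₁' x) (ζ₂' x)) ∧
      ∀ x : ℤ, U (ζ₁' x) = η₁ x ∧ U (ζ₂' x) = η₂ (x + 1) := by
  have hmap : ∀ x, (Hx x).map (U : H →ₗ[ℂ] H) = Kx η₁ η₂ x :=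
    map_Hx_eq (Kx_isOrtho hη) (finrank_Kx hη) (map_Hx_le_Kx_sup U hη hrange)
      (map_Hx_eq_Kx_of_comp_P_eq hζ hUPy)
  refine ⟨fun x => U.symm (η₁ x), fun x => U.symm (η₂ (x + 1)), fun x => ?_,
    fun x => ⟨U.apply_symm_apply _, U.apply_symm_apply _⟩⟩
  exact ONBx.of_mem_map (hmap x ▸ subset_span (by simp)) (hmap x ▸ subset_span (by simp))
    (hη x).2.2.1 (hη _).2.2.2.1 (inner_η₁_η₂_succ_eq_zero hη x)

/-- If for some `y` we have
`U P_y = |η₁ʸ⟩⟨ζ₁ʸ| + |η₂^{y+1}⟩⟨ζ₂ʸ|`, then there are orthonormal bases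
`{ζ₁ˣ, ζ₂ˣ}` of every `H_x` with `U ζ₁ˣ = η₁ˣ` and `U ζ₂ˣ = η₂^{x+1}`,
i.e. `U = Σ_x |η₁ˣ⟩⟨ζ₁ˣ| + |η₂^{x+1}⟩⟨ζ₂ˣ|`. -/
theorem exclude_case_two (U : H ≃ₗᵢ[ℂ] H) (hU : SSQW U) (η₁ η₂ : ℤ → H)
    (hη : ∀ x : ℤ, ONBx x (η₁ x) (η₂ x))
    (hrange : ∀ x : ℤ, ∀ ψ ∈ Hx x,
      U ψ ∈ Submodule.span ℂ {η₁ (x - 1)} ⊔ Hx x ⊔ Submodule.span ℂ {η₂ (x + 1)})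
    (y : ℤ) (ζ₁ ζ₂ : H) (hζ : ONBx y ζ₁ ζ₂)
    (hUPy : (clm U).comp (P y) = ketbra (η₁ y) ζ₁ + ketbra (η₂ (y + 1)) ζ₂) :
    ∃ ζ₁' ζ₂' : ℤ → H, (∀ x : ℤ, ONBx x (ζ₁' x) (ζ₂' x)) ∧
      ∀ x : ℤ, U (ζ₁' x) = η₁ x ∧ U (ζ₂' x) = η₂ (x + 1) :=
  exclude_case_two_general U η₁ η₂ hη hrange y ζ₁ ζ₂ hζ hUPy
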